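/- arXiv:math/0206260 — 2 statements merged into one kernel-verified Lean document; each statement's English description precedes it below -/
import Mathlib

section
/- If d ∈ D then √2 · d ∈ D. -/
/-!
Write `B(u, v) = u₀v₀ + u₁v₁`, so that `φ(p, q) = B(p - q, p - q)`. Two facts about `B` on `ℂ²`
carry the argument: the Gram determinant of three vectors vanishes, and an isotropic vector
`B`-orthogonal to a non-isotropic one is zero. Hence a quadrilateral with two opposite sides of
`φ`-length `c ≠ 0` and suitable diagonals is a parallelogram, and unit steps `P Q R` with
`φ(P, R) = 4c` continue along a line.

A plane configuration of bars whose lengths lie in `D` can be placed on any pair `x, y` by a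
similarity, and the union of the finite sets witnessing its bars is finite; so `|x - y| ∈ D` as
soon as the values of `φ` on the bars force `φ(f x, f y)`. From `d ∈ D`, the Moser spindle forces
`√3 d`, half a regular hexagon `2d`, a ladder in the triangular lattice `√13 d`, and in a `2 × 3`
rectangle the diagonals `√13 d` force right angles, which fixes the diagonal `√2 d` of a square.
-/

/-- `φ(p,q) = (p₁−q₁)² + (p₂−q₂)²` for `p, q ∈ ℂ²`. -/
noncomputable def phi2 (p q : Fin 2 → ℂ) : ℂ := (p 0 - q 0) ^ 2 + (p 1 - q 1) ^ 2

/-- `D` is the set of real `d > 0` such that for all `x, y ∈ ℝ²` with `|x−y| = d` there is a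
finite set `S` with `{x,y} ⊆ S ⊆ ℝ²` such that every map `f : S → ℂ²` preserving unit
distance (i.e. `φ(f u, f v) = 1` whenever `u, v ∈ S` and `|u−v| = 1`) satisfies
`φ(f x, f y) = d²`. -/
noncomputable def D : Set ℝ :=
  {d | 0 < d ∧ ∀ x y : EuclideanSpace ℝ (Fin 2), dist x y = d →
    ∃ S : Set (EuclideanSpace ℝ (Fin 2)), S.Finite ∧ x ∈ S ∧ y ∈ S ∧
      ∀ f : EuclideanSpace ℝ (Fin 2) → (Fin 2 → ℂ),
        (∀ u ∈ S, ∀ v ∈ S, dist u v = 1 → phi2 (f u) (f v) = 1) →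
        phi2 (f x) (f y) = (d : ℂ) ^ 2}

open Complex

local notation "ℝ²" => EuclideanSpace ℝ (Fin 2)

noncomputable section

def PreservesUnitDist (S : Set ℝ²) (f : ℝ² → Fin 2 → ℂ) : Prop :=
  ∀ u ∈ S, ∀ v ∈ S, dist u v = 1 → phi2 (f u) (f v) = 1

lemma PreservesUnitDist.mono {S T : Set ℝ²} {f : ℝ² → Fin 2 → ℂ} (hST : S ⊆ T)
    (hf : PreservesUnitDist T f) : PreservesUnitDist S f :=
  fun u hu v hv => hf u (hST hu) v (hST hv)

lemma exists_finite_forcing (L : List (ℝ² × ℝ²)) (hL : ∀ e ∈ L, dist e.1 e.2 ∈ D) :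
    ∃ S : Set ℝ², S.Finite ∧ ∀ f, PreservesUnitDist S f →
      ∀ e ∈ L, phi2 (f e.1) (f e.2) = (dist e.1 e.2 : ℂ) ^ 2 := by
  induction L with
  | nil => exact ⟨∅, Set.finite_empty, by simp⟩
  | cons e L ih =>
    rw [List.forall_mem_cons] at hL
    obtain ⟨S, hS, hSforce⟩ := ih hL.2
    obtain ⟨Se, hSe, -, -, hSeforce⟩ := hL.1.2 e.1 e.2 rfl
    refine ⟨Se ∪ S, hSe.union hS, fun f hf => List.forall_mem_cons.2 ⟨?_, ?_⟩⟩
    · exact hSeforce f (hf.mono Set.subset_union_left)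
    · exact hSforce f (hf.mono Set.subset_union_right)

lemma exists_similarity (x y : ℝ²) {a b : ℂ} (hab : a ≠ b) {r : ℝ}
    (hr : dist x y = r * ‖a - b‖) :
    ∃ g : ℂ → ℝ², g a = x ∧ g b = y ∧ ∀ z w, dist (g z) (g w) = r * ‖z - w‖ := by
  let e := orthonormalBasisOneI.repr
  let ρ := e.symm (y - x) / (b - a)
  have hρ : ‖ρ‖ = r := by
    have hba : ‖b - a‖ ≠ 0 := norm_ne_zero_iff.2 (sub_ne_zero.2 hab.symm)
    rw [norm_div, LinearIsometryEquiv.norm_map, ← dist_eq_norm, dist_comm, hr, norm_sub_rev,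
      mul_div_cancel_right₀ _ hba]
  refine ⟨fun z => x + e (ρ * (z - a)), by simp, ?_, fun z w => ?_⟩
  · simp [ρ, div_mul_cancel₀ _ (sub_ne_zero.2 hab.symm)]
  · rw [dist_add_left, dist_eq_norm, ← map_sub, LinearIsometryEquiv.norm_map, ← mul_sub,
      sub_sub_sub_cancel_right, norm_mul, hρ]

/-- A bar from `p` to `q` in the plane, modelled as `ℂ`. Its squared length is recorded as an
integer for the algebra; that it equals `normSq (p - q)` is a separate hypothesis where needed. -/
structure Bar where
  p : ℂ
  q : ℂ
  sqLen : ℕ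

/-- `c` is the square of the unit of length in which the bars are drawn. -/
def Forces (L : List Bar) (t : Bar) : Prop :=
  ∀ c : ℂ, c ≠ 0 → ∀ F : ℂ → Fin 2 → ℂ,
    (∀ b ∈ L, phi2 (F b.p) (F b.q) = b.sqLen * c) → phi2 (F t.p) (F t.q) = t.sqLen * c

lemma Bar.norm_sub_eq_sqrt {b : Bar} (hb : normSq (b.p - b.q) = b.sqLen) :
    ‖b.p - b.q‖ = √b.sqLen := by
  rw [norm_def, hb]

lemma ofReal_sqrt_mul_sq (k : ℕ) (d : ℝ) : ((√k * d : ℝ) : ℂ) ^ 2 = k * (d : ℂ) ^ 2 := by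
  rw [ofReal_mul, mul_pow, ← ofReal_pow, Real.sq_sqrt k.cast_nonneg, ofReal_natCast]

theorem sqrt_mul_mem_D_of_forces {d : ℝ} (hd : 0 < d) {L : List Bar} {t : Bar}
    (hL : ∀ b ∈ L, normSq (b.p - b.q) = b.sqLen) (hLD : ∀ b ∈ L, √b.sqLen * d ∈ D)
    (ht : normSq (t.p - t.q) = t.sqLen) (ht0 : 0 < t.sqLen) (hF : Forces L t) :
    √t.sqLen * d ∈ D := by
  have hpq : t.p ≠ t.q := by
    rintro h
    rw [h, sub_self, map_zero] at ht
    exact ht0.ne (mod_cast ht)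
  refine ⟨by positivity, fun x y hxy => ?_⟩
  obtain ⟨g, rfl, rfl, hg⟩ := exists_similarity x y hpq (r := d)
    (by rw [hxy, Bar.norm_sub_eq_sqrt ht, mul_comm])
  have hgL : ∀ b ∈ L, dist (g b.p) (g b.q) = √b.sqLen * d := fun b hb => by
    rw [hg, Bar.norm_sub_eq_sqrt (hL b hb), mul_comm]
  obtain ⟨S, hS, hSforce⟩ := exists_finite_forcing (L.map fun b => (g b.p, g b.q))
    (by simpa using fun b hb => hgL b hb ▸ hLD b hb)
  refine ⟨S ∪ {g t.p, g t.q}, hS.union (by simp), by simp, by simp, fun f hf => ?_⟩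
  rw [ofReal_sqrt_mul_sq]
  refine hF _ (by simpa using hd.ne') (f ∘ g) fun b hb => ?_
  have := hSforce f (PreservesUnitDist.mono Set.subset_union_left hf) _ (List.mem_map_of_mem hb)
  rwa [hgL b hb, ofReal_sqrt_mul_sq] at this

variable {c : ℂ}

section Algebra

variable {u v w : Fin 2 → ℂ}

lemma phi2_comm (p q : Fin 2 → ℂ) : phi2 p q = phi2 q p := by
  unfold phi2; ring

lemma phi2_eq_dotProduct (p q : Fin 2 → ℂ) : phi2 p q = (q - p) ⬝ᵥ (q - p) := by
  simp only [phi2, dotProduct, Fin.sum_univ_two, Pi.sub_apply]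
  ring

lemma dotProduct_sub_sub (p q r : Fin 2 → ℂ) :
    (p - r) ⬝ᵥ (q - r) = (phi2 r p + phi2 r q - phi2 p q) / 2 := by
  simp only [phi2, dotProduct, Fin.sum_univ_two, Pi.sub_apply]
  ring

lemma eq_zero_of_isotropic_of_orthogonal (hu : u ⬝ᵥ u ≠ 0) (huv : u ⬝ᵥ v = 0)
    (hv : v ⬝ᵥ v = 0) : v = 0 := by
  simp only [dotProduct, Fin.sum_univ_two] at hu huv hv
  have h₀ : v 0 ^ 2 * (u 0 * u 0 + u 1 * u 1) = 0 := by
    linear_combination (u 0 * v 0 - u 1 * v 1) * huv + u 1 ^ 2 * hv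
  have h₁ : v 1 ^ 2 * (u 0 * u 0 + u 1 * u 1) = 0 := by
    linear_combination (u 1 * v 1 - u 0 * v 0) * huv + u 0 ^ 2 * hv
  ext i
  fin_cases i
  · simpa using (mul_eq_zero.1 h₀).resolve_right hu
  · simpa using (mul_eq_zero.1 h₁).resolve_right hu

lemma eq_of_dotProduct_eq (hc : c ≠ 0) (hu : u ⬝ᵥ u = c) (hw : w ⬝ᵥ w = c)
    (huw : u ⬝ᵥ w = c) : w = u := by
  have hwu : w ⬝ᵥ u = c := dotProduct_comm w u ▸ huw
  refine sub_eq_zero.1 (eq_zero_of_isotropic_of_orthogonal (hu ▸ hc) ?_ ?_)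
  · rw [dotProduct_sub, huw, hu, sub_self]
  · rw [sub_dotProduct, dotProduct_sub, dotProduct_sub, hu, hw, huw, hwu]
    ring

lemma gram_det_eq_zero (u v w : Fin 2 → ℂ) :
    (u ⬝ᵥ u) * (v ⬝ᵥ v) * (w ⬝ᵥ w) + 2 * (u ⬝ᵥ v) * (v ⬝ᵥ w) * (u ⬝ᵥ w)
      - (u ⬝ᵥ u) * (v ⬝ᵥ w) ^ 2 - (v ⬝ᵥ v) * (u ⬝ᵥ w) ^ 2 - (w ⬝ᵥ w) * (u ⬝ᵥ v) ^ 2 = 0 := by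
  simp only [dotProduct, Fin.sum_univ_two]
  ring

variable {P Q R S : Fin 2 → ℂ}

/-- `h` says `(Q - P) ⬝ᵥ (R - S) = c`. -/
lemma sub_eq_sub_of_phi2 (hc : c ≠ 0) (hPQ : phi2 P Q = c) (hSR : phi2 S R = c)
    (h : phi2 P R + phi2 Q S - phi2 P S - phi2 Q R = 2 * c) : R - S = Q - P := by
  refine eq_of_dotProduct_eq hc ?_ ?_ ?_
  · rw [← phi2_eq_dotProduct, hPQ]
  · rw [← phi2_eq_dotProduct, hSR]
  · simp only [phi2, dotProduct, Fin.sum_univ_two, Pi.sub_apply] at h ⊢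
    linear_combination h / 2

lemma sub_eq_sub_of_phi2_eq_four_mul (hc : c ≠ 0) (hPQ : phi2 P Q = c) (hQR : phi2 Q R = c)
    (hPR : phi2 P R = 4 * c) : R - Q = Q - P :=
  sub_eq_sub_of_phi2 hc hPQ hQR (by rw [hPR, hPQ, hQR, phi2_eq_dotProduct Q Q, sub_self, dotProduct_zero]; ring)

end Algebra

lemma phi2_eq_three_mul_or_eq_of_rhombus {A R S U : Fin 2 → ℂ} (hc : c ≠ 0)
    (hAR : phi2 A R = c) (hAS : phi2 A S = c) (hRS : phi2 R S = c) (hRU : phi2 R U = c)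
    (hSU : phi2 S U = c) : phi2 A U = 3 * c ∨ U = A := by
  have hgram := gram_det_eq_zero (R - A) (S - A) (U - A)
  rw [← phi2_eq_dotProduct, ← phi2_eq_dotProduct, ← phi2_eq_dotProduct, dotProduct_sub_sub,
    dotProduct_sub_sub, dotProduct_sub_sub, hAR, hAS, hRS, hRU, hSU] at hgram
  have : c * phi2 A U * (3 * c - phi2 A U) = 0 := by linear_combination 4 * hgram
  rcases mul_eq_zero.1 this with h | h
  · right
    have hAU : phi2 A U = 0 := (mul_eq_zero.1 h).resolve_left hc
    refine sub_eq_zero.1 (eq_zero_of_isotropic_of_orthogonal (u := R - A) ?_ ?_ ?_)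
    · rwa [← phi2_eq_dotProduct, hAR]
    · rw [dotProduct_sub_sub, hAR, hRU, hAU]; ring
    · rw [← phi2_eq_dotProduct, hAU]
  · left
    linear_combination -h

lemma phi2_eq_three_mul_of_spindle {A R S U R' S' U' : Fin 2 → ℂ} (hc : c ≠ 0)
    (hAR : phi2 A R = c) (hAS : phi2 A S = c) (hRS : phi2 R S = c)
    (hRU : phi2 R U = c) (hSU : phi2 S U = c)
    (hAR' : phi2 A R' = c) (hAS' : phi2 A S' = c) (hRS' : phi2 R' S' = c)
    (hRU' : phi2 R' U' = c) (hSU' : phi2 S' U' = c) (hUU' : phi2 U U' = c) :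
    phi2 A U = 3 * c := by
  refine (phi2_eq_three_mul_or_eq_of_rhombus hc hAR hAS hRS hRU hSU).resolve_right fun hUA => ?_
  subst hUA
  rcases phi2_eq_three_mul_or_eq_of_rhombus hc hAR' hAS' hRS' hRU' hSU' with h | rfl
  · exact hc (by linear_combination (hUU' - h) / 2)
  · exact hc (by rw [← hUU']; simp [phi2])

def Bar.rotate (ρ : ℂ) (b : Bar) : Bar := ⟨ρ * b.p, ρ * b.q, b.sqLen⟩

lemma Bar.normSq_rotate (ρ : ℂ) (b : Bar) :
    normSq ((b.rotate ρ).p - (b.rotate ρ).q) = normSq ρ * normSq (b.p - b.q) := by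
  rw [Bar.rotate, ← mul_sub, normSq_mul]

def rhombus : List Bar :=
  [⟨0, ⟨√3 / 2, 1 / 2⟩, 1⟩, ⟨0, ⟨√3 / 2, -1 / 2⟩, 1⟩, ⟨⟨√3 / 2, 1 / 2⟩, ⟨√3 / 2, -1 / 2⟩, 1⟩,
    ⟨⟨√3 / 2, 1 / 2⟩, √3, 1⟩, ⟨⟨√3 / 2, -1 / 2⟩, √3, 1⟩]

/-- The rotation about `0` that brings the far vertex `√3` of `rhombus` to distance `1`. -/
def spindleRotation : ℂ := ⟨5 / 6, √11 / 6⟩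

def moserSpindle : List Bar :=
  rhombus ++ rhombus.map (Bar.rotate spindleRotation) ++ [⟨√3, spindleRotation * √3, 1⟩]

lemma moserSpindle_exact : ∀ b ∈ moserSpindle, normSq (b.p - b.q) = b.sqLen := by
  have hrhombus : ∀ b ∈ rhombus, normSq (b.p - b.q) = b.sqLen := by
    simp [rhombus, normSq_apply]
    ring_nf
    norm_num
  have hρ : normSq spindleRotation = 1 := by
    simp [spindleRotation, normSq_apply]
    ring_nf
    norm_num
  simp only [moserSpindle, List.forall_mem_append, List.forall_mem_map, Bar.normSq_rotate, hρ,
    one_mul, List.forall_mem_cons]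
  refine ⟨⟨hrhombus, hrhombus⟩, ?_, by simp⟩
  simp [spindleRotation, normSq_apply]
  ring_nf
  norm_num

lemma forces_moserSpindle : Forces moserSpindle ⟨0, √3, 3⟩ := by
  intro c hc F hF
  simp only [moserSpindle, rhombus, Bar.rotate, List.forall_mem_append, List.forall_mem_map,
    List.forall_mem_cons, List.not_mem_nil, IsEmpty.forall_iff, imp_true_iff, Nat.cast_one,
    Nat.cast_ofNat, one_mul, mul_zero] at hF ⊢
  obtain ⟨⟨⟨h₁, h₂, h₃, h₄, h₅, -⟩, h₆, h₇, h₈, h₉, h₁₀, -⟩, h₁₁, -⟩ := hF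
  exact phi2_eq_three_mul_of_spindle hc h₁ h₂ h₃ h₄ h₅ h₆ h₇ h₈ h₉ h₁₀ h₁₁

lemma sqrt_three_mul_mem_D {d : ℝ} (hd : d ∈ D) : √3 * d ∈ D := by
  have hLD : ∀ b ∈ moserSpindle, √b.sqLen * d ∈ D := by
    simp [moserSpindle, rhombus, Bar.rotate, hd]
  simpa using sqrt_mul_mem_D_of_forces hd.1 moserSpindle_exact hLD
    (by simp [normSq_apply]) (by norm_num) forces_moserSpindle

lemma phi2_eq_four_mul_of_halfHexagon {M A P Q Y : Fin 2 → ℂ} (hc : c ≠ 0)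
    (hMA : phi2 M A = c) (hMP : phi2 M P = c) (hMQ : phi2 M Q = c) (hMY : phi2 M Y = c)
    (hAP : phi2 A P = c) (hPQ : phi2 P Q = c) (hQY : phi2 Q Y = c)
    (hAQ : phi2 A Q = 3 * c) (hPY : phi2 P Y = 3 * c) : phi2 A Y = 4 * c := by
  have h₁ : Q - P = M - A := sub_eq_sub_of_phi2 hc (by rwa [phi2_comm]) hPQ
    (by rw [hAQ, hMP, hAP, hMQ]; ring)
  have h₂ : Y - Q = M - P := sub_eq_sub_of_phi2 hc (by rwa [phi2_comm]) hQY
    (by rw [hPY, hMQ, hPQ, hMY]; ring)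
  obtain rfl : Y = 2 * M - A := by linear_combination h₁ + h₂
  simp only [phi2, Pi.sub_apply, Pi.mul_apply, Pi.ofNat_apply] at hMA ⊢
  linear_combination 4 * hMA

def ω : ℂ := ⟨1 / 2, √3 / 2⟩

@[simp] lemma ω_re : ω.re = 1 / 2 := rfl

@[simp] lemma ω_im : ω.im = √3 / 2 := rfl

def halfHexagon : List Bar :=
  [⟨1, 0, 1⟩, ⟨1, ω, 1⟩, ⟨1, 1 + ω, 1⟩, ⟨1, 2, 1⟩, ⟨0, ω, 1⟩, ⟨ω, 1 + ω, 1⟩, ⟨1 + ω, 2, 1⟩,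
    ⟨0, 1 + ω, 3⟩, ⟨ω, 2, 3⟩]

lemma halfHexagon_exact : ∀ b ∈ halfHexagon, normSq (b.p - b.q) = b.sqLen := by
  simp [halfHexagon, normSq_apply]
  ring_nf
  norm_num

lemma forces_halfHexagon : Forces halfHexagon ⟨0, 2, 4⟩ := by
  intro c hc F hF
  simp only [halfHexagon, List.forall_mem_cons, List.not_mem_nil, IsEmpty.forall_iff,
    imp_true_iff, Nat.cast_one, Nat.cast_ofNat, one_mul] at hF ⊢
  obtain ⟨h₁, h₂, h₃, h₄, h₅, h₆, h₇, h₈, h₉, -⟩ := hF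
  exact phi2_eq_four_mul_of_halfHexagon hc h₁ h₂ h₃ h₄ h₅ h₆ h₇ h₈ h₉

lemma two_mul_mem_D {d : ℝ} (hd : d ∈ D) (h3 : √3 * d ∈ D) : 2 * d ∈ D := by
  have hLD : ∀ b ∈ halfHexagon, √b.sqLen * d ∈ D := by
    simp [halfHexagon, hd, h3]
  simpa [show √4 = 2 by norm_num] using sqrt_mul_mem_D_of_forces hd.1 halfHexagon_exact hLD
    (by simp [normSq_apply]; norm_num) (by norm_num) forces_halfHexagon

lemma phi2_eq_thirteen_mul_of_ladder {X P W Q₁ Q₂ Q₃ : Fin 2 → ℂ} (hc : c ≠ 0)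
    (hXP : phi2 X P = c) (hXW : phi2 X W = c) (hPW : phi2 P W = c)
    (hPQ₁ : phi2 P Q₁ = c) (hWQ₁ : phi2 W Q₁ = c) (hXQ₁ : phi2 X Q₁ = 3 * c)
    (hQ₁Q₂ : phi2 Q₁ Q₂ = c) (hQ₂Q₃ : phi2 Q₂ Q₃ = c)
    (hPQ₂ : phi2 P Q₂ = 4 * c) (hQ₁Q₃ : phi2 Q₁ Q₃ = 4 * c) : phi2 X Q₃ = 13 * c := by
  have h₁ : Q₁ - P = W - X := sub_eq_sub_of_phi2 hc hXW hPQ₁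
    (by rw [hXQ₁, phi2_comm, hPW, hXP, hWQ₁]; ring)
  have h₂ := sub_eq_sub_of_phi2_eq_four_mul hc hPQ₁ hQ₁Q₂ hPQ₂
  have h₃ := sub_eq_sub_of_phi2_eq_four_mul hc hQ₁Q₂ hQ₂Q₃ hQ₁Q₃
  obtain rfl : Q₃ = P + 3 * (W - X) := by linear_combination h₃ + 2 * h₂ + 3 * h₁
  simp only [phi2, Pi.sub_apply, Pi.add_apply, Pi.mul_apply, Pi.ofNat_apply] at hXP hXW hPW ⊢
  linear_combination 4 * hXP + 12 * hXW - 3 * hPW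

def ladder : List Bar :=
  [⟨0, 1, 1⟩, ⟨0, ω, 1⟩, ⟨1, ω, 1⟩, ⟨1, 1 + ω, 1⟩, ⟨ω, 1 + ω, 1⟩, ⟨0, 1 + ω, 3⟩,
    ⟨1 + ω, 1 + 2 * ω, 1⟩, ⟨1 + 2 * ω, 1 + 3 * ω, 1⟩, ⟨1, 1 + 2 * ω, 4⟩, ⟨1 + ω, 1 + 3 * ω, 4⟩]

lemma ladder_exact : ∀ b ∈ ladder, normSq (b.p - b.q) = b.sqLen := by
  simp [ladder, normSq_apply]
  ring_nf
  norm_num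

lemma forces_ladder : Forces ladder ⟨0, 1 + 3 * ω, 13⟩ := by
  intro c hc F hF
  simp only [ladder, List.forall_mem_cons, List.not_mem_nil, IsEmpty.forall_iff,
    imp_true_iff, Nat.cast_one, Nat.cast_ofNat, one_mul] at hF ⊢
  obtain ⟨h₁, h₂, h₃, h₄, h₅, h₆, h₇, h₈, h₉, h₁₀, -⟩ := hF
  exact phi2_eq_thirteen_mul_of_ladder hc h₁ h₂ h₃ h₄ h₅ h₆ h₇ h₈ h₉ h₁₀

lemma sqrt_thirteen_mul_mem_D {d : ℝ} (hd : d ∈ D) (h2 : 2 * d ∈ D) (h3 : √3 * d ∈ D) :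
    √13 * d ∈ D := by
  have hLD : ∀ b ∈ ladder, √b.sqLen * d ∈ D := by
    simp [ladder, hd, h3, show √4 = 2 by norm_num, h2]
  simpa using sqrt_mul_mem_D_of_forces hd.1 ladder_exact hLD
    (by simp [normSq_apply]; ring_nf; norm_num) (by norm_num) forces_ladder

/-- `X, Zₖ, Wₖ, Tₖ, Y` are the images of `0, k, k i, 2 + k i, 1 + i`. The diagonals `Z₂ W₃` and
`X T₃` of length `√13` force `Z₁ - X ⊥ W₁ - X` and `Z₁ - X ⊥ T₁ - Z₂`; then `φ(W₁, T₁) = 4c`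
gives `T₁ - Z₂ = W₁ - X`, and `φ(T₁, Y) = c` excludes the second common point `X` of the unit
circles about `Z₁` and `W₁`. -/
lemma phi2_eq_two_mul_of_rectangle {X Z₁ Z₂ W₁ W₂ W₃ T₁ T₂ T₃ Y : Fin 2 → ℂ} (hc : c ≠ 0)
    (hXZ₁ : phi2 X Z₁ = c) (hZ₁Z₂ : phi2 Z₁ Z₂ = c) (hXZ₂ : phi2 X Z₂ = 4 * c)
    (hXW₁ : phi2 X W₁ = c) (hW₁W₂ : phi2 W₁ W₂ = c) (hW₂W₃ : phi2 W₂ W₃ = c)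
    (hXW₂ : phi2 X W₂ = 4 * c) (hW₁W₃ : phi2 W₁ W₃ = 4 * c)
    (hZ₂T₁ : phi2 Z₂ T₁ = c) (hT₁T₂ : phi2 T₁ T₂ = c) (hT₂T₃ : phi2 T₂ T₃ = c)
    (hZ₂T₂ : phi2 Z₂ T₂ = 4 * c) (hT₁T₃ : phi2 T₁ T₃ = 4 * c)
    (hZ₂W₃ : phi2 Z₂ W₃ = 13 * c) (hXT₃ : phi2 X T₃ = 13 * c) (hW₁T₁ : phi2 W₁ T₁ = 4 * c)
    (hZ₁Y : phi2 Z₁ Y = c) (hW₁Y : phi2 W₁ Y = c) (hT₁Y : phi2 T₁ Y = c) :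
    phi2 X Y = 2 * c := by
  have hZ₂ := sub_eq_sub_of_phi2_eq_four_mul hc hXZ₁ hZ₁Z₂ hXZ₂
  have hW₂ := sub_eq_sub_of_phi2_eq_four_mul hc hXW₁ hW₁W₂ hXW₂
  have hW₃ := sub_eq_sub_of_phi2_eq_four_mul hc hW₁W₂ hW₂W₃ hW₁W₃
  have hT₂ := sub_eq_sub_of_phi2_eq_four_mul hc hZ₂T₁ hT₁T₂ hZ₂T₂
  have hT₃ := sub_eq_sub_of_phi2_eq_four_mul hc hT₁T₂ hT₂T₃ hT₁T₃
  obtain rfl : T₃ = Z₂ + 3 * (T₁ - Z₂) := by linear_combination hT₃ + 2 * hT₂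
  obtain rfl : W₃ = X + 3 * (W₁ - X) := by linear_combination hW₃ + 2 * hW₂
  obtain rfl : Z₂ = X + 2 * (Z₁ - X) := by linear_combination hZ₂
  have hperp : (Z₁ - X) ⬝ᵥ (W₁ - X) = 0 := by
    simp only [phi2, dotProduct, Fin.sum_univ_two, Pi.sub_apply, Pi.add_apply, Pi.mul_apply,
      Pi.ofNat_apply] at hXZ₁ hXW₁ hZ₂W₃ ⊢
    linear_combination (9 * hXW₁ + 4 * hXZ₁ - hZ₂W₃) / 12
  have hperp' : (Z₁ - X) ⬝ᵥ (T₁ - (X + 2 * (Z₁ - X))) = 0 := by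
    simp only [phi2, dotProduct, Fin.sum_univ_two, Pi.sub_apply, Pi.add_apply, Pi.mul_apply,
      Pi.ofNat_apply] at hXZ₁ hZ₂T₁ hXT₃ ⊢
    linear_combination (hXT₃ - 9 * hZ₂T₁ - 4 * hXZ₁) / 12
  have hT₁ : T₁ - (X + 2 * (Z₁ - X)) = W₁ - X := by
    refine eq_of_dotProduct_eq hc (by rw [← phi2_eq_dotProduct, hXW₁])
      (by rw [← phi2_eq_dotProduct, hZ₂T₁]) ?_
    simp only [phi2, dotProduct, Fin.sum_univ_two, Pi.sub_apply, Pi.add_apply, Pi.mul_apply,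
      Pi.ofNat_apply] at hXZ₁ hXW₁ hZ₂T₁ hW₁T₁ hperp hperp' ⊢
    linear_combination (hZ₂T₁ + 4 * hXZ₁ + hXW₁ - hW₁T₁) / 2 + 2 * hperp' - 2 * hperp
  obtain rfl : T₁ = X + 2 * (Z₁ - X) + (W₁ - X) := by linear_combination hT₁
  simp only [phi2, dotProduct, Fin.sum_univ_two, Pi.sub_apply, Pi.add_apply, Pi.mul_apply,
    Pi.ofNat_apply] at hXZ₁ hZ₁Y hW₁Y hT₁Y hperp ⊢
  linear_combination (2 * hZ₁Y + hW₁Y + 2 * hXZ₁ - hT₁Y) / 2 + 2 * hperp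

def rectangle : List Bar :=
  [⟨0, 1, 1⟩, ⟨1, 2, 1⟩, ⟨0, 2, 4⟩,
    ⟨0, I, 1⟩, ⟨I, 2 * I, 1⟩, ⟨2 * I, 3 * I, 1⟩, ⟨0, 2 * I, 4⟩, ⟨I, 3 * I, 4⟩,
    ⟨2, 2 + I, 1⟩, ⟨2 + I, 2 + 2 * I, 1⟩, ⟨2 + 2 * I, 2 + 3 * I, 1⟩, ⟨2, 2 + 2 * I, 4⟩,
    ⟨2 + I, 2 + 3 * I, 4⟩,
    ⟨2, 3 * I, 13⟩, ⟨0, 2 + 3 * I, 13⟩, ⟨I, 2 + I, 4⟩,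
    ⟨1, 1 + I, 1⟩, ⟨I, 1 + I, 1⟩, ⟨2 + I, 1 + I, 1⟩]

lemma rectangle_exact : ∀ b ∈ rectangle, normSq (b.p - b.q) = b.sqLen := by
  simp [rectangle, normSq_apply]
  norm_num

lemma forces_rectangle : Forces rectangle ⟨0, 1 + I, 2⟩ := by
  intro c hc F hF
  simp only [rectangle, List.forall_mem_cons, List.not_mem_nil, IsEmpty.forall_iff,
    imp_true_iff, Nat.cast_one, Nat.cast_ofNat, one_mul] at hF ⊢
  obtain ⟨h₁, h₂, h₃, h₄, h₅, h₆, h₇, h₈, h₉, h₁₀, h₁₁, h₁₂, h₁₃, h₁₄, h₁₅, h₁₆, h₁₇, h₁₈, h₁₉,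
    -⟩ := hF
  exact phi2_eq_two_mul_of_rectangle hc h₁ h₂ h₃ h₄ h₅ h₆ h₇ h₈ h₉ h₁₀ h₁₁ h₁₂ h₁₃ h₁₄ h₁₅ h₁₆ h₁₇
    h₁₈ h₁₉

end

theorem sqrt_two_mul_mem_D {d : ℝ} (hd : d ∈ D) : Real.sqrt 2 * d ∈ D := by
  have h3 := sqrt_three_mul_mem_D hd
  have h2 := two_mul_mem_D hd h3
  have h13 := sqrt_thirteen_mul_mem_D hd h2 h3
  have hLD : ∀ b ∈ rectangle, √b.sqLen * d ∈ D := by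
    simp [rectangle, hd, show √4 = 2 by norm_num, h2, h13]
  simpa using sqrt_mul_mem_D_of_forces hd.1 rectangle_exact hLD
    (by simp [normSq_apply]; norm_num) (by norm_num) forces_rectangle
end

section
/- If x, y ∈ ℝ² and |x−y| = (2√2/3)^k · (√3)^l for some non-negative integers k, l, then there exists a finite set S with {x,y} ⊆ S ⊆ ℝ² such that every unit-distance preserving map f : S → ℂ² satisfies φ(f(x), f(y)) = |x−y|². -/
open Complex Filter

local notation "ℝ²" => EuclideanSpace ℝ (Fin 2)

lemma phi2_self (p : Fin 2 → ℂ) : phi2 p p = 0 := by simp [phi2]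

lemma eq_zero_of_orthogonal_of_cross_ne_zero {R : Type*} [CommRing R] [NoZeroDivisors R]
    {z₀ z₁ u₀ u₁ v₀ v₁ : R} (hc : u₀ * v₁ - u₁ * v₀ ≠ 0)
    (hu : z₀ * u₀ + z₁ * u₁ = 0) (hv : z₀ * v₀ + z₁ * v₁ = 0) : z₀ = 0 ∧ z₁ = 0 := by
  constructor
  · refine (mul_eq_zero.1 ?_).resolve_right hc
    linear_combination v₁ * hu - u₁ * hv
  · refine (mul_eq_zero.1 ?_).resolve_right hc
    linear_combination u₀ * hv - v₀ * hu

/- With `u = A - B` and `w = C + D - 2 A`, the vector `C - D` is orthogonal to both `u` and `w`.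
Either `u × w ≠ 0` and `C = D`, or `u ∥ w` and Lagrange's identity `(u·u)(w·w) = (u·w)²` gives
the formula, since `w·w = 4 T₁ - φ(C, D)` and `u·w = T₂ - T₁ - S`. -/
lemma eq_or_mul_phi2_eq_of_kite {A B C D : Fin 2 → ℂ} {S T₁ T₂ : ℂ} (hAB : phi2 A B = S)
    (hCA : phi2 C A = T₁) (hDA : phi2 D A = T₁) (hCB : phi2 C B = T₂) (hDB : phi2 D B = T₂) :
    C = D ∨ S * phi2 C D = 4 * T₁ * S - (T₁ - T₂ + S) ^ 2 := by
  unfold phi2 at *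
  set u₀ := A 0 - B 0
  set u₁ := A 1 - B 1
  set w₀ := C 0 + D 0 - 2 * A 0
  set w₁ := C 1 + D 1 - 2 * A 1
  by_cases hc : u₀ * w₁ - u₁ * w₀ = 0
  · right
    linear_combination 2 * S * hCA + 2 * S * hDA - (u₀ * w₁ - u₁ * w₀) * hc
      + (w₀ ^ 2 + w₁ ^ 2) * hAB
      + (T₁ - T₂ + S - (u₀ * w₀ + u₁ * w₁)) * (hCB - hCA - hAB + hDB - hDA - hAB) / 2
  · left
    obtain ⟨h₀, h₁⟩ := eq_zero_of_orthogonal_of_cross_ne_zero (z₀ := C 0 - D 0) (z₁ := C 1 - D 1)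
      hc (by linear_combination (hCB - hCA - hDB + hDA) / 2) (by linear_combination hCA - hDA)
    ext i
    fin_cases i
    · exact sub_eq_zero.1 h₀
    · exact sub_eq_zero.1 h₁

lemma phi2_eq_four_mul_of_doubling {P Q R W Y : Fin 2 → ℂ} {m : ℂ} (hm : m ≠ 0)
    (hPQ : phi2 P Q = m) (hPR : phi2 P R = m) (hQR : phi2 Q R = m) (hQW : phi2 Q W = m)
    (hRW : phi2 R W = m) (hPW : phi2 P W = 3 * m) (hQY : phi2 Q Y = m)
    (hRY : phi2 R Y = 3 * m) (hWY : phi2 W Y = m) : phi2 P Y = 4 * m := by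
  unfold phi2 at *
  set u₀ := Q 0 - P 0
  set u₁ := Q 1 - P 1
  set v₀ := R 0 - P 0
  set v₁ := R 1 - P 1
  -- `u × v` squares to `3 m² / 4`, so `W - P` is pinned down to `u + v`.
  have hc : u₀ * v₁ - u₁ * v₀ ≠ 0 := by
    intro hc
    apply hm
    have : 3 * m ^ 2 = 0 := by
      linear_combination -4 * (v₀ ^ 2 + v₁ ^ 2) * hPQ - 4 * m * hPR
        + (2 * (u₀ * v₀ + u₁ * v₁) + m) * (hPQ + hPR - hQR) + 4 * (u₀ * v₁ - u₁ * v₀) * hc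
    simpa using this
  obtain ⟨hW₀, hW₁⟩ := eq_zero_of_orthogonal_of_cross_ne_zero
    (z₀ := W 0 - Q 0 - R 0 + P 0) (z₁ := W 1 - Q 1 - R 1 + P 1) hc
    (by linear_combination (hPW - hQW - 2 * hPQ - hPR + hQR) / 2)
    (by linear_combination (hPW - hRW - 2 * hPR - hPQ + hQR) / 2)
  linear_combination -hWY + hQY + hRY + hPQ + hPR - hQR
    + (W 0 + Q 0 + R 0 - P 0 - 2 * Y 0) * hW₀ + (W 1 + Q 1 + R 1 - P 1 - 2 * Y 1) * hW₁

lemma exists_isometry_complex (x y : ℝ²) :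
    ∃ P : ℂ → ℝ², Isometry P ∧ P ⟨0, 0⟩ = x ∧ P ⟨dist x y, 0⟩ = y := by
  let e := orthonormalBasisOneI.repr.symm
  let v := e y - e x
  have hv : ‖v‖ = dist x y := by rw [← dist_eq_norm, e.dist_map, dist_comm]
  refine ⟨fun z => e.symm (e x + z * exp (v.arg * I)), Isometry.of_dist_eq fun z w => ?_, ?_, ?_⟩
  · rw [e.symm.dist_map, dist_add_left, dist_eq_norm, ← sub_mul, norm_mul, norm_exp_ofReal_mul_I,
      mul_one, dist_eq_norm]
  · simp [show (⟨0, 0⟩ : ℂ) = 0 from rfl]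
  · have : (⟨dist x y, 0⟩ : ℂ) = ‖v‖ := by rw [hv]; rfl
    simp only [this, norm_mul_exp_arg_mul_I, v, add_sub_cancel,
      LinearIsometryEquiv.symm_apply_apply]

lemma Isometry.dist_sq_complex_mk {P : ℂ → ℝ²} (hP : Isometry P) (a b c d : ℝ) :
    dist (P ⟨a, b⟩) (P ⟨c, d⟩) ^ 2 = (a - c) ^ 2 + (b - d) ^ 2 := by
  rw [hP.dist_eq, dist_eq_re_im, Real.sq_sqrt (by positivity)]

lemma exists_kite {x y : ℝ²} {Q S T₁ T₂ : ℝ} (hxy : dist x y ^ 2 = Q) (hS : 0 < S)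
    (hkite : Q * S = 4 * T₁ * S - (T₁ - T₂ + S) ^ 2) :
    ∃ a b : ℝ², dist a b ^ 2 = S ∧ dist x a ^ 2 = T₁ ∧ dist y a ^ 2 = T₁ ∧
      dist x b ^ 2 = T₂ ∧ dist y b ^ 2 = T₂ := by
  obtain ⟨P, hP, rfl, hy⟩ := exists_isometry_complex x y
  set D := dist (P ⟨0, 0⟩) y
  rw [← hy]
  have hs : √S ^ 2 = S := Real.sq_sqrt hS.le
  obtain ⟨c, hc⟩ : ∃ c, 2 * √S * c = T₁ - T₂ + S := ⟨_, mul_div_cancel₀ _ (by positivity)⟩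
  have hc₁ : D ^ 2 + 4 * c ^ 2 = 4 * T₁ := mul_left_cancel₀ hS.ne' <| by
    linear_combination S * hxy + hkite + (2 * √S * c + T₁ - T₂ + S) * hc - 4 * c ^ 2 * hs
  have hc₂ : D ^ 2 + 4 * (c - √S) ^ 2 = 4 * T₂ := by
    linear_combination hc₁ - 4 * hc + 4 * hs
  refine ⟨P ⟨D / 2, c⟩, P ⟨D / 2, c - √S⟩, ?_, ?_, ?_, ?_, ?_⟩ <;>
    rw [hP.dist_sq_complex_mk] <;> linarith

lemma exists_rotation {x y : ℝ²} {Q E : ℝ} (hxy : dist x y ^ 2 = Q) (hQ : 0 < Q) (hE : 0 ≤ E)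
    (hEQ : E ≤ 4 * Q) : ∃ y' : ℝ², dist x y' ^ 2 = Q ∧ dist y y' ^ 2 = E := by
  obtain ⟨P, hP, rfl, hy⟩ := exists_isometry_complex x y
  set D := dist (P ⟨0, 0⟩) y
  rw [← hy]
  have hD : D ≠ 0 := by rintro hD; rw [hD] at hxy; linarith
  obtain ⟨a, ha⟩ : ∃ a, 2 * D * a = 2 * Q - E := ⟨_, mul_div_cancel₀ _ (by positivity)⟩
  obtain ⟨b, hb⟩ : ∃ b, 4 * Q * b ^ 2 = E * (4 * Q - E) :=
    ⟨√(E * (4 * Q - E) / (4 * Q)), by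
      rw [Real.sq_sqrt (div_nonneg (mul_nonneg hE (by linarith)) (by positivity))]
      field_simp⟩
  have hab : a ^ 2 + b ^ 2 = Q := mul_left_cancel₀ (by positivity : 4 * Q ≠ 0) <| by
    linear_combination hb + (2 * D * a + 2 * Q - E) * ha - 4 * a ^ 2 * hxy
  refine ⟨P ⟨a, b⟩, ?_, ?_⟩ <;> rw [hP.dist_sq_complex_mk] <;> linarith

lemma exists_doubling_config {x y : ℝ²} {Q : ℝ} (hxy : dist x y ^ 2 = 4 * Q) :
    ∃ q r w : ℝ², dist x q ^ 2 = Q ∧ dist x r ^ 2 = Q ∧ dist q r ^ 2 = Q ∧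
      dist q w ^ 2 = Q ∧ dist r w ^ 2 = Q ∧ dist x w ^ 2 = 3 * Q ∧
      dist q y ^ 2 = Q ∧ dist r y ^ 2 = 3 * Q ∧ dist w y ^ 2 = Q := by
  obtain ⟨P, hP, rfl, hy⟩ := exists_isometry_complex x y
  set D := dist (P ⟨0, 0⟩) y
  rw [← hy]
  have hh : (√3 * D / 4) ^ 2 = 3 * Q / 4 := by
    rw [div_pow, mul_pow, Real.sq_sqrt (by norm_num)]; linear_combination 3 / 16 * hxy
  refine ⟨P ⟨D / 2, 0⟩, P ⟨D / 4, √3 * D / 4⟩, P ⟨3 * D / 4, √3 * D / 4⟩, ?_⟩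
  simp only [hP.dist_sq_complex_mk]
  refine ⟨?_, ?_, ?_, ?_, ?_, ?_, ?_, ?_, ?_⟩ <;> linarith

/-- Properties of `f` forced by preserving unit distances on some finite set. -/
def unitDistFilter : Filter (ℝ² → Fin 2 → ℂ) :=
  ⨅ S : Finset ℝ², 𝓟 {f | ∀ u ∈ S, ∀ v ∈ S, dist u v = 1 → phi2 (f u) (f v) = 1}

lemma eventually_unitDistFilter_iff {p : (ℝ² → Fin 2 → ℂ) → Prop} :
    (∀ᶠ f in unitDistFilter, p f) ↔ ∃ S : Finset ℝ²,
      ∀ f, (∀ u ∈ S, ∀ v ∈ S, dist u v = 1 → phi2 (f u) (f v) = 1) → p f := by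
  refine (hasBasis_iInf_principal fun S T => ⟨S ∪ T, ?_, ?_⟩).eventually_iff.trans (by simp)
  · exact fun f hf u hu v hv => hf u (Finset.mem_union_left T hu) v (Finset.mem_union_left T hv)
  · exact fun f hf u hu v hv => hf u (Finset.mem_union_right S hu) v (Finset.mem_union_right S hv)

def IsRigidSqDist (Q : ℝ) : Prop :=
  ∀ x y : ℝ², dist x y ^ 2 = Q → ∀ᶠ f in unitDistFilter, phi2 (f x) (f y) = Q

lemma isRigidSqDist_one : IsRigidSqDist 1 := by
  intro x y hxy
  rw [pow_eq_one_iff_of_nonneg dist_nonneg two_ne_zero] at hxy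
  refine eventually_unitDistFilter_iff.2 ⟨{x, y}, fun f hf => ?_⟩
  simpa using hf x (by simp) y (by simp) hxy

namespace IsRigidSqDist

variable {Q S T₁ T₂ E q : ℝ}

lemma eventually_eq_or_of_kite (hS : IsRigidSqDist S) (hT₁ : IsRigidSqDist T₁)
    (hT₂ : IsRigidSqDist T₂) (hS0 : 0 < S) (hkite : Q * S = 4 * T₁ * S - (T₁ - T₂ + S) ^ 2)
    {x y : ℝ²} (hxy : dist x y ^ 2 = Q) :
    ∀ᶠ f in unitDistFilter, f x = f y ∨ phi2 (f x) (f y) = Q := by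
  obtain ⟨a, b, hab, hxa, hya, hxb, hyb⟩ := exists_kite hxy hS0 hkite
  filter_upwards [hS a b hab, hT₁ x a hxa, hT₁ y a hya, hT₂ x b hxb, hT₂ y b hyb]
    with f hab hxa hya hxb hyb
  refine (eq_or_mul_phi2_eq_of_kite hab hxa hya hxb hyb).imp_right fun h => ?_
  refine mul_left_cancel₀ (ofReal_ne_zero.2 hS0.ne') ?_
  rw [h]
  exact_mod_cast (by linarith : 4 * T₁ * S - (T₁ - T₂ + S) ^ 2 = S * Q)

lemma of_kite (hS : IsRigidSqDist S) (hT₁ : IsRigidSqDist T₁) (hT₂ : IsRigidSqDist T₂)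
    (hE : IsRigidSqDist E) (hS0 : 0 < S) (hE0 : 0 < E) (hEQ : E ≤ 4 * Q) (hne : E ≠ Q)
    (hkite : Q * S = 4 * T₁ * S - (T₁ - T₂ + S) ^ 2) : IsRigidSqDist Q := by
  intro x y hxy
  obtain ⟨y', hxy', hyy'⟩ := exists_rotation hxy (by linarith) hE0.le hEQ
  filter_upwards [eventually_eq_or_of_kite hS hT₁ hT₂ hS0 hkite hxy,
    eventually_eq_or_of_kite hS hT₁ hT₂ hS0 hkite hxy', hE y y' hyy'] with f h h' hyy'
  refine h.resolve_left fun hfxy => ?_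
  rw [hfxy] at h'
  rcases h' with h' | h'
  · rw [h', phi2_self] at hyy'
    exact hE0.ne' (by exact_mod_cast hyy'.symm)
  · exact hne (by exact_mod_cast hyy'.symm.trans h')

lemma four_mul (hq : IsRigidSqDist q) (h3q : IsRigidSqDist (3 * q)) (hq0 : q ≠ 0) :
    IsRigidSqDist (4 * q) := by
  intro x y hxy
  obtain ⟨a, b, c, hxa, hxb, hab, hac, hbc, hxc, hay, hby, hcy⟩ := exists_doubling_config hxy
  filter_upwards [hq x a hxa, hq x b hxb, hq a b hab, hq a c hac, hq b c hbc, h3q x c hxc,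
    hq a y hay, h3q b y hby, hq c y hcy] with f hxa hxb hab hac hbc hxc hay hby hcy
  push_cast at hxc hby ⊢
  exact phi2_eq_four_mul_of_doubling (ofReal_ne_zero.2 hq0) hxa hxb hab hac hbc hxc hay hby hcy

lemma three_mul (h : IsRigidSqDist q) (hq : 0 < q) : IsRigidSqDist (3 * q) :=
  h.of_kite h h h hq hq (by linarith) (by linarith) (by ring)

lemma eleven_thirds_mul (h : IsRigidSqDist q) (hq : 0 < q) : IsRigidSqDist (11 / 3 * q) :=
  (h.three_mul hq).of_kite h (h.three_mul hq) h (by linarith) hq (by linarith) (by linarith)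
    (by ring)

lemma div_three (h : IsRigidSqDist q) (hq : 0 < q) : IsRigidSqDist (q / 3) :=
  (h.eleven_thirds_mul hq).of_kite h h h (by linarith) hq (by linarith) (by linarith) (by ring)

lemma eight_mul (h : IsRigidSqDist q) (hq : 0 < q) : IsRigidSqDist (8 * q) :=
  (h.four_mul (h.three_mul hq) hq.ne').of_kite (h.three_mul hq) (h.three_mul hq) h
    (by linarith) hq (by linarith) (by linarith) (by ring)

lemma eight_ninths_mul (h : IsRigidSqDist q) (hq : 0 < q) : IsRigidSqDist (8 / 9 * q) := by
  have h' := ((h.eight_mul hq).div_three (by positivity)).div_three (by positivity)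
  convert h' using 1
  ring

end IsRigidSqDist

lemma isRigidSqDist_eight_ninths_pow_mul_three_pow (k l : ℕ) :
    IsRigidSqDist ((8 / 9) ^ k * 3 ^ l) := by
  induction k with
  | zero =>
    induction l with
    | zero => simpa using isRigidSqDist_one
    | succ l ih => simpa [pow_succ', mul_comm] using ih.three_mul (by positivity)
  | succ k ih =>
    convert ih.eight_ninths_mul (by positivity) using 1
    ring

theorem exists_finite_rigid_set (x y : EuclideanSpace ℝ (Fin 2)) (k l : ℕ)
    (h : dist x y = (2 * Real.sqrt 2 / 3) ^ k * Real.sqrt 3 ^ l) :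
    ∃ S : Set (EuclideanSpace ℝ (Fin 2)), S.Finite ∧ x ∈ S ∧ y ∈ S ∧
      ∀ f : EuclideanSpace ℝ (Fin 2) → (Fin 2 → ℂ),
        (∀ u ∈ S, ∀ v ∈ S, dist u v = 1 → phi2 (f u) (f v) = 1) →
        phi2 (f x) (f y) = ((dist x y : ℝ) : ℂ) ^ 2 := by
  have hxy : dist x y ^ 2 = (8 / 9) ^ k * 3 ^ l := by
    rw [h, mul_pow, ← pow_mul, ← pow_mul, mul_comm k, mul_comm l, pow_mul, pow_mul, div_pow,
      mul_pow, Real.sq_sqrt (by norm_num), Real.sq_sqrt (by norm_num)]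
    norm_num
  obtain ⟨S, hS⟩ := eventually_unitDistFilter_iff.1
    (isRigidSqDist_eight_ninths_pow_mul_three_pow k l x y hxy)
  refine ⟨insert x (insert y S), (S.finite_toSet.insert y).insert x, by simp, by simp,
    fun f hf => ?_⟩
  rw [hS f fun u hu v hv => hf u (by simp [hu]) v (by simp [hv]), ← hxy, ofReal_pow]
end
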